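/- arXiv:1512.04046 — 5 statements merged into one kernel-verified Lean document; each statement's English description precedes it below -/
import Mathlib

section
/- Let k ≥ 0 and let D be an element of C_k, written as a multilinear map D(y₁,…,y_k; x₁,x₂,x₃,x₄). Arrange the k+4 arguments in slots 1,…,k+4 so that slots 1–4 carry x₁,…,x₄ and slots 5,…,k+4 carry y₁,…,y_k, and let c denote the Young symmetrizer of the tableau with rows {1,3,5,6,…,k+4} and {2,4} and columns {1,2} and {3,4}. Then c·D = 2(k+3)(k+2)·k!·D. -/
open scoped RealInnerProductSpace

namespace CurvJet

variable {V : Type*} [NormedAddCommGroup V] [InnerProductSpace ℝ V] {n : ℕ}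

/-- Quadrilinear forms on `V`, the ambient space of algebraic curvature tensors. -/
abbrev Curv (V : Type*) [NormedAddCommGroup V] [InnerProductSpace ℝ V] : Type _ :=
  V →ₗ[ℝ] V →ₗ[ℝ] V →ₗ[ℝ] V →ₗ[ℝ] ℝ

/-- The underlying 4-argument function of a quadrilinear form. -/
def toFun4 (R : Curv V) : V → V → V → V → ℝ := fun z₁ z₂ z₃ z₄ => R z₁ z₂ z₃ z₄

/-- `R` is an algebraic curvature tensor: antisymmetry in the first pair, pair symmetry,
and the first Bianchi identity. -/
def IsCurv (R : Curv V) : Prop :=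
  (∀ x y z w, R x y z w = - R y x z w) ∧
  (∀ x y z w, R x y z w = R z w x y) ∧
  (∀ x y z w, R x y z w + R y z x w + R z x y w = 0)

/-- The Ricci tensor `ric_R(x,y) = -∑ᵢ R(x,eᵢ,y,eᵢ)`. -/
noncomputable def ric (e : OrthonormalBasis (Fin n) ℝ V) (R : Curv V) (x y : V) : ℝ :=
  - ∑ i, R x (e i) y (e i)

/-- The curvature endomorphism `R_{x,y}`, characterized by `⟪R_{x,y}z, w⟫ = R(x,y,z,w)`. -/
noncomputable def curvEnd (e : OrthonormalBasis (Fin n) ℝ V) (R : Curv V) (x y z : V) : V :=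
  ∑ i, R x y z (e i) • e i

/-- Action of an endomorphism `B` on a covariant 4-tensor by algebraic derivation. -/
def act4 (B : V → V) (A : V → V → V → V → ℝ) (x₁ x₂ x₃ x₄ : V) : ℝ :=
  -(A (B x₁) x₂ x₃ x₄ + A x₁ (B x₂) x₃ x₄ + A x₁ x₂ (B x₃) x₄ + A x₁ x₂ x₃ (B x₄))

/-- Action of an endomorphism `B` on a covariant 2-tensor by algebraic derivation. -/
def act2 (B : V → V) (A : V → V → ℝ) (x y : V) : ℝ :=
  -(A (B x) y + A x (B y))

/-- `R*A` for a covariant 4-tensor `A`. -/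
noncomputable def star4 (e : OrthonormalBasis (Fin n) ℝ V) (R : Curv V)
    (A : V → V → V → V → ℝ) (x₁ x₂ x₃ x₄ : V) : ℝ :=
  -((∑ j, act4 (curvEnd e R x₁ (e j)) A (e j) x₂ x₃ x₄)
    + (∑ j, act4 (curvEnd e R x₂ (e j)) A x₁ (e j) x₃ x₄)
    + (∑ j, act4 (curvEnd e R x₃ (e j)) A x₁ x₂ (e j) x₄)
    + (∑ j, act4 (curvEnd e R x₄ (e j)) A x₁ x₂ x₃ (e j)))

/-- `R*A` for a covariant 2-tensor `A`. -/
noncomputable def star2 (e : OrthonormalBasis (Fin n) ℝ V) (R : Curv V)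
    (A : V → V → ℝ) (x y : V) : ℝ :=
  -((∑ j, act2 (curvEnd e R x (e j)) A (e j) y)
    + (∑ j, act2 (curvEnd e R y (e j)) A x (e j)))

/-- The algebraic curvature tensor `R*R`. -/
noncomputable def RstarR (e : OrthonormalBasis (Fin n) ℝ V) (R : Curv V) :
    V → V → V → V → ℝ :=
  star4 e R (toFun4 R)

/-- Row symmetrization of the Young tableau with rows `{1,3}`, `{2,4}` on a 4-tensor. -/
def rowSym22 (T : V → V → V → V → ℝ) (x₁ x₂ x₃ x₄ : V) : ℝ :=
  T x₁ x₂ x₃ x₄ + T x₃ x₂ x₁ x₄ + T x₁ x₄ x₃ x₂ + T x₃ x₄ x₁ x₂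

/-- The Young symmetrizer of the tableau with rows `{1,3}`, `{2,4}` and columns
`{1,2}`, `{3,4}`, acting on 4-tensors. -/
def young22 (T : V → V → V → V → ℝ) (x₁ x₂ x₃ x₄ : V) : ℝ :=
  rowSym22 T x₁ x₂ x₃ x₄ - rowSym22 T x₂ x₁ x₃ x₄
    - rowSym22 T x₁ x₂ x₄ x₃ + rowSym22 T x₂ x₁ x₄ x₃

/-- Row symmetrization of the Young tableau with rows `{1,3,5,6}`, `{2,4}` on a 6-tensor. -/
noncomputable def rowSym42 (T : V → V → V → V → V → V → ℝ) (x₁ x₂ x₃ x₄ x₅ x₆ : V) : ℝ :=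
  ∑ σ : Equiv.Perm (Fin 4),
    (T (![x₁, x₃, x₅, x₆] (σ 0)) x₂ (![x₁, x₃, x₅, x₆] (σ 1)) x₄
        (![x₁, x₃, x₅, x₆] (σ 2)) (![x₁, x₃, x₅, x₆] (σ 3))
     + T (![x₁, x₃, x₅, x₆] (σ 0)) x₄ (![x₁, x₃, x₅, x₆] (σ 1)) x₂
        (![x₁, x₃, x₅, x₆] (σ 2)) (![x₁, x₃, x₅, x₆] (σ 3)))

/-- The Young symmetrizer of the tableau on six slots with rows `{1,3,5,6}`, `{2,4}` and
columns `{1,2}`, `{3,4}`. -/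
noncomputable def young42 (T : V → V → V → V → V → V → ℝ) (x₁ x₂ x₃ x₄ x₅ x₆ : V) : ℝ :=
  rowSym42 T x₁ x₂ x₃ x₄ x₅ x₆ - rowSym42 T x₂ x₁ x₃ x₄ x₅ x₆
    - rowSym42 T x₁ x₂ x₄ x₃ x₅ x₆ + rowSym42 T x₂ x₁ x₄ x₃ x₅ x₆

/-- Row symmetrization of the Young tableau with rows `{1,3,5}`, `{2,4}` on a 5-tensor
(the fifth function argument is the slot lying in the first row). -/
noncomputable def rowSym5 (T : V → V → V → V → V → ℝ) (z₁ z₂ z₃ z₄ z₅ : V) : ℝ :=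
  ∑ σ : Equiv.Perm (Fin 3),
    (T (![z₁, z₃, z₅] (σ 0)) z₂ (![z₁, z₃, z₅] (σ 1)) z₄ (![z₁, z₃, z₅] (σ 2))
     + T (![z₁, z₃, z₅] (σ 0)) z₄ (![z₁, z₃, z₅] (σ 1)) z₂ (![z₁, z₃, z₅] (σ 2)))

/-- The Young symmetrizer of the tableau on five slots with rows `{1,3,5}`, `{2,4}` and
columns `{1,2}`, `{3,4}` (the fifth function argument is the slot in the first row). -/
noncomputable def young5 (T : V → V → V → V → V → ℝ) (z₁ z₂ z₃ z₄ z₅ : V) : ℝ :=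
  rowSym5 T z₁ z₂ z₃ z₄ z₅ - rowSym5 T z₂ z₁ z₃ z₄ z₅
    - rowSym5 T z₁ z₂ z₄ z₃ z₅ + rowSym5 T z₂ z₁ z₄ z₃ z₅

/-- First-order jet conditions: each `∇ₓR` is a curvature tensor and the second Bianchi
identity holds. -/
def IsJet1 (D1 : V →ₗ[ℝ] Curv V) : Prop :=
  (∀ x, IsCurv (D1 x)) ∧
  (∀ x y z u v, D1 x y z u v + D1 y z x u v + D1 z x y u v = 0)

/-- Second-order jet conditions: each `∇²_{x,y}R` is a curvature tensor, the second Bianchi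
identity holds, and the Ricci identity `∇²_{x,y}R − ∇²_{y,x}R = R_{x,y}·R` holds. -/
def IsJet2 (e : OrthonormalBasis (Fin n) ℝ V) (R : Curv V)
    (D2 : V →ₗ[ℝ] V →ₗ[ℝ] Curv V) : Prop :=
  (∀ x y, IsCurv (D2 x y)) ∧
  (∀ x y z w u v, D2 x y z w u v + D2 x z w y u v + D2 x w y z u v = 0) ∧
  (∀ x y z₁ z₂ z₃ z₄, D2 x y z₁ z₂ z₃ z₄ - D2 y x z₁ z₂ z₃ z₄ =
    act4 (curvEnd e R x y) (toFun4 R) z₁ z₂ z₃ z₄)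

/-- Algebraic two-jet `(R, ∇R, ∇²R)`. -/
def IsTwoJet (e : OrthonormalBasis (Fin n) ℝ V) (R : Curv V)
    (D1 : V →ₗ[ℝ] Curv V) (D2 : V →ₗ[ℝ] V →ₗ[ℝ] Curv V) : Prop :=
  IsCurv R ∧ IsJet1 D1 ∧ IsJet2 e R D2

/-- `∇ₓric(y,z) = -∑ᵢ ∇ₓR(y,eᵢ,z,eᵢ)`. -/
noncomputable def nablaRic (e : OrthonormalBasis (Fin n) ℝ V)
    (D1 : V →ₗ[ℝ] Curv V) (x y z : V) : ℝ :=
  - ∑ i, D1 x y (e i) z (e i)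

/-- `∇²_{x,y}ric(z,w) = -∑ᵢ ∇²_{x,y}R(z,eᵢ,w,eᵢ)`. -/
noncomputable def nabla2Ric (e : OrthonormalBasis (Fin n) ℝ V)
    (D2 : V →ₗ[ℝ] V →ₗ[ℝ] Curv V) (x y z w : V) : ℝ :=
  - ∑ i, D2 x y z (e i) w (e i)

/-- The rough Laplacian `∇*∇R(z₁,z₂,z₃,z₄) = -∑ᵢ ∇²_{eᵢ,eᵢ}R(z₁,z₂,z₃,z₄)`. -/
noncomputable def roughLap (e : OrthonormalBasis (Fin n) ℝ V)
    (D2 : V →ₗ[ℝ] V →ₗ[ℝ] Curv V) (z₁ z₂ z₃ z₄ : V) : ℝ :=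
  - ∑ i, D2 (e i) (e i) z₁ z₂ z₃ z₄

/-- `∇ₓδ_yR(z,w) = -∑ᵢ ∇²_{x,eᵢ}R(eᵢ,y,z,w)`. -/
noncomputable def nablaDelta (e : OrthonormalBasis (Fin n) ℝ V)
    (D2 : V →ₗ[ℝ] V →ₗ[ℝ] Curv V) (x y z w : V) : ℝ :=
  - ∑ i, D2 x (e i) (e i) y z w

/-- The two-jet is Einstein: `ric = c⟪·,·⟫`, `∇ric = 0` and `∇²ric = 0`. -/
def IsEinsteinJet (e : OrthonormalBasis (Fin n) ℝ V) (R : Curv V)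
    (D1 : V →ₗ[ℝ] Curv V) (D2 : V →ₗ[ℝ] V →ₗ[ℝ] Curv V) : Prop :=
  (∃ c : ℝ, ∀ x y, ric e R x y = c * ⟪x, y⟫) ∧
  (∀ x y z, nablaRic e D1 x y z = 0) ∧
  (∀ x y z w, nabla2Ric e D2 x y z w = 0)


/-- Row symmetrization for the tableau with rows `{1,3,5,…,k+4}` and `{2,4}` acting on a
`(k+4)`-tensor `D(y₁,…,y_k;x₁,x₂,x₃,x₄)`, where slots `1,2,3,4` carry `x₁,…,x₄` and slots
`5,…,k+4` carry `y₁,…,y_k`. -/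
noncomputable def rowK (k : ℕ) (D : (Fin k → V) → V → V → V → V → ℝ)
    (y : Fin k → V) (x₁ x₂ x₃ x₄ : V) : ℝ :=
  ∑ σ : Equiv.Perm (Fin (k + 2)),
    (fun v : Fin (k + 2) → V =>
      D (fun i => v (σ ⟨(i : ℕ) + 2, by omega⟩)) (v (σ ⟨0, by omega⟩)) x₂
          (v (σ ⟨1, by omega⟩)) x₄
        + D (fun i => v (σ ⟨(i : ℕ) + 2, by omega⟩)) (v (σ ⟨0, by omega⟩)) x₄
          (v (σ ⟨1, by omega⟩)) x₂)
      (Fin.cons x₁ (Fin.cons x₃ y))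

/-- The Young symmetrizer of the tableau with rows `{1,3,5,…,k+4}`, `{2,4}` and columns
`{1,2}`, `{3,4}`. -/
noncomputable def youngK (k : ℕ) (D : (Fin k → V) → V → V → V → V → ℝ)
    (y : Fin k → V) (x₁ x₂ x₃ x₄ : V) : ℝ :=
  rowK k D y x₁ x₂ x₃ x₄ - rowK k D y x₂ x₁ x₃ x₄
    - rowK k D y x₁ x₂ x₄ x₃ + rowK k D y x₂ x₁ x₄ x₃



/-!
The row symmetrizer places the k + 2 vectors x₁, x₃, y₁, …, y_k in the slots 1, 3 and the
derivative slots. Since D is symmetric in the derivative slots, only the two vectors landing in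
slots 1 and 3 matter, and each such ordered pair occurs k! times. There are three kinds of pairs:
{x₁, x₃} itself, one of x₁, x₃ together with some y_m, and two vectors y_j, y_m. The second
Bianchi identity lets the column antisymmetrizer move a vector from a derivative slot back into
slot 1 or 3, and after this every kind contributes a fixed multiple of D: 12, then 12 for each m,
then 2 for each ordered pair j ≠ m. The total is k!(12 + 12k + 2k(k - 1)) = 2(k + 3)(k + 2)k!.
-/

section Permutations

variable {α : Type*}

theorem sum_perm_comp_eq_sum_cons {M : Type*} [AddCommMonoid M] {n : ℕ}
    (f : (Fin (n + 1) → α) → M) (v : Fin (n + 1) → α) :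
    ∑ σ : Equiv.Perm (Fin (n + 1)), f (v ∘ σ) =
      ∑ p, ∑ τ : Equiv.Perm (Fin n), f (Fin.cons (v p) (Fin.tail (v ∘ Equiv.swap 0 p) ∘ τ)) := by
  rw [← Equiv.sum_comp Equiv.Perm.decomposeFin.symm, Fintype.sum_prod_type]
  refine Finset.sum_congr rfl fun p _ => Finset.sum_congr rfl fun τ _ => congrArg f ?_
  ext i
  cases i using Fin.cases with
  | zero => simp [Equiv.Perm.decomposeFin_symm_apply_zero]
  | succ i => simp [Equiv.Perm.decomposeFin_symm_apply_succ, Fin.tail]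

theorem sum_perm_comp_of_forall_comp_eq {M : Type*} [AddCommMonoid M] {n : ℕ}
    {f : (Fin n → α) → M} (hf : ∀ w (τ : Equiv.Perm (Fin n)), f (w ∘ τ) = f w) (w : Fin n → α) :
    ∑ τ : Equiv.Perm (Fin n), f (w ∘ τ) = n.factorial • f w := by
  simp [hf, Fintype.card_perm]

theorem tail_comp_swap_zero_succ {n : ℕ} (w : Fin (n + 1) → α) (j : Fin n) :
    Fin.tail (w ∘ Equiv.swap 0 j.succ) = Function.update (Fin.tail w) j (w 0) := by
  rw [Equiv.comp_swap_eq_update, Fin.tail_update_zero, Fin.tail_update_succ]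

theorem sum_perm_eq_factorial_smul_sum_pairs {M : Type*} [AddCommMonoid M] {k : ℕ}
    {Φ : (Fin k → α) → α → α → M} (hΦ : ∀ z (τ : Equiv.Perm (Fin k)) a c, Φ (z ∘ τ) a c = Φ z a c)
    (v : Fin (k + 2) → α) :
    ∑ σ : Equiv.Perm (Fin (k + 2)), Φ (fun i => v (σ i.succ.succ)) (v (σ 0)) (v (σ 1)) =
      k.factorial • ∑ p, ∑ q, Φ (Fin.tail (Fin.tail (v ∘ Equiv.swap 0 p) ∘ Equiv.swap 0 q))
        (v p) (Fin.tail (v ∘ Equiv.swap 0 p) q) := by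
  refine (sum_perm_comp_eq_sum_cons (fun u => Φ (fun i => u i.succ.succ) (u 0) (u 1)) v).trans ?_
  rw [Finset.smul_sum]
  refine Finset.sum_congr rfl fun p _ => ?_
  refine (sum_perm_comp_eq_sum_cons (fun r => Φ (fun i => r i.succ) (v p) (r 0))
    (Fin.tail (v ∘ Equiv.swap 0 p))).trans ?_
  rw [Finset.smul_sum]
  refine Finset.sum_congr rfl fun q _ => ?_
  simp only [Fin.cons_succ, Fin.cons_zero]
  exact sum_perm_comp_of_forall_comp_eq (f := fun z => Φ z _ _) (fun z τ => hΦ z τ _ _) _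

end Permutations

section Identities

def colAntisymm {α : Type*} : (α → α → α → α → ℝ) →ₗ[ℝ] (α → α → α → α → ℝ) where
  toFun T x₁ x₂ x₃ x₄ := T x₁ x₂ x₃ x₄ - T x₂ x₁ x₃ x₄ - T x₁ x₂ x₄ x₃ + T x₂ x₁ x₄ x₃
  map_add' S T := by ext; simp only [Pi.add_apply]; ring
  map_smul' c T := by ext; simp only [Pi.smul_apply, smul_eq_mul, RingHom.id_apply]; ring

theorem colAntisymm_apply {α : Type*} (T : α → α → α → α → ℝ) (x₁ x₂ x₃ x₄ : α) :
    colAntisymm T x₁ x₂ x₃ x₄ =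
      T x₁ x₂ x₃ x₄ - T x₂ x₁ x₃ x₄ - T x₁ x₂ x₄ x₃ + T x₂ x₁ x₄ x₃ := rfl

/-- Symmetrization over the row `{2,4}`. -/
def rowPair (T : Curv V) (a b c d : V) : ℝ := T a b c d + T a d c b

/-- The terms of the row symmetrizer in which one of `x₁, x₃` occupies a derivative slot
whose entry `u` has moved to slot 1 or 3. -/
def oneSlotTerm (E : V → Curv V) (u : V) (x₁ x₂ x₃ x₄ : V) : ℝ :=
  rowPair (E x₃) x₁ x₂ u x₄ + rowPair (E x₁) x₃ x₂ u x₄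
    + rowPair (E x₁) u x₂ x₃ x₄ + rowPair (E x₃) u x₂ x₁ x₄

def twoSlotTerm (E : V → V → Curv V) (u w : V) (x₁ x₂ x₃ x₄ : V) : ℝ :=
  rowPair (E x₁ x₃) u x₂ w x₄

theorem IsCurv.rowPair_comm {T : Curv V} (hT : IsCurv T) (a b c d : V) :
    rowPair T a b c d = rowPair T c b a d := by
  simp only [rowPair]
  linarith [hT.2.1 a b c d, hT.2.1 a d c b]

theorem IsCurv.young22_eq {R : Curv V} (hR : IsCurv R) (x₁ x₂ x₃ x₄ : V) :
    young22 (toFun4 R) x₁ x₂ x₃ x₄ = 12 * R x₁ x₂ x₃ x₄ := by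
  simp only [young22, rowSym22, toFun4]
  linear_combination (-5) * hR.2.1 x₁ x₄ x₂ x₃ + 6 * hR.1 x₁ x₄ x₂ x₃
    - 5 * hR.2.2 x₁ x₂ x₃ x₄ - 5 * hR.2.1 x₁ x₃ x₂ x₄ + 4 * hR.1 x₁ x₃ x₂ x₄
    - 5 * hR.2.2 x₁ x₂ x₄ x₃ - hR.2.1 x₂ x₁ x₄ x₃ + 3 * hR.1 x₁ x₂ x₄ x₃ + hR.1 x₁ x₄ x₃ x₂
    + hR.2.2 x₁ x₃ x₂ x₄ - 4 * hR.1 x₁ x₂ x₃ x₄ - 2 * hR.2.1 x₁ x₂ x₃ x₄ - hR.1 x₂ x₄ x₃ x₁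
    + 2 * hR.2.1 x₂ x₁ x₃ x₄ - hR.2.2 x₁ x₃ x₄ x₂ + hR.2.1 x₁ x₂ x₄ x₃ + hR.2.2 x₂ x₃ x₄ x₁
    - hR.2.2 x₁ x₄ x₂ x₃

/-- Antisymmetrizing a derivative slot against slot 2 moves the entry of slot 1 into the
derivative slot. -/
theorem sub_eq_of_bianchi₂ {E : V → Curv V} (hE : ∀ a, IsCurv (E a))
    (hB : ∀ a b c d e, E a b c d e + E b c a d e + E c a b d e = 0) (a b c d e : V) :
    E a c b d e - E b c a d e = E c a b d e := by
  linear_combination hB a c b d e - (hE c).1 b a d e - (hE b).1 a c d e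

theorem colAntisymm_rowPair_jet {E : V → Curv V} (hE : ∀ a, IsCurv (E a))
    (hB : ∀ a b c d e, E a b c d e + E b c a d e + E c a b d e = 0) (u x₁ x₂ x₃ x₄ : V) :
    colAntisymm (fun x₁ x₂ x₃ x₄ => rowPair (E x₁) u x₂ x₃ x₄) x₁ x₂ x₃ x₄ =
      3 * E u x₁ x₂ x₃ x₄ := by
  have hkey := sub_eq_of_bianchi₂ hE hB
  simp only [colAntisymm_apply, rowPair]
  linear_combination -(hE x₁).2.1 u x₂ x₃ x₄ + (hE x₁).1 u x₄ x₃ x₂ + (hE x₂).2.1 u x₁ x₃ x₄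
    - (hE x₂).1 u x₄ x₃ x₁ - (hE x₁).1 u x₂ x₄ x₃ + 2 * (hE x₁).1 u x₂ x₃ x₄
    - (hE u).2.1 x₁ x₄ x₂ x₃ + (hE u).1 x₁ x₄ x₂ x₃ + 2 * hkey u x₁ x₂ x₃ x₄
    - (hE u).2.2 x₁ x₂ x₃ x₄ - 2 * (hE u).1 x₁ x₂ x₃ x₄ - (hE u).2.1 x₁ x₃ x₂ x₄
    + (hE u).1 x₁ x₃ x₂ x₄ - hkey u x₁ x₂ x₄ x₃ - (hE u).2.2 x₁ x₂ x₄ x₃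
    + (hE u).1 x₁ x₂ x₄ x₃ - (hE x₁).2.2 u x₃ x₄ x₂ + (hE x₂).2.2 u x₃ x₄ x₁

theorem colAntisymm_oneSlotTerm {E : V → Curv V} (hE : ∀ a, IsCurv (E a))
    (hB : ∀ a b c d e, E a b c d e + E b c a d e + E c a b d e = 0) (u x₁ x₂ x₃ x₄ : V) :
    colAntisymm (oneSlotTerm E u) x₁ x₂ x₃ x₄ = 12 * E u x₁ x₂ x₃ x₄ := by
  set F : V → V → V → V → ℝ := fun x₁ x₂ x₃ x₄ => rowPair (E x₁) u x₂ x₃ x₄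
  have hsplit : oneSlotTerm E u = 2 • (F + fun x₁ x₂ x₃ x₄ => F x₃ x₄ x₁ x₂) := by
    ext x₁ x₂ x₃ x₄
    simp only [oneSlotTerm, F, Pi.smul_apply, Pi.add_apply,
      (hE x₃).rowPair_comm x₁, (hE x₁).rowPair_comm x₃]
    simp only [rowPair]
    ring
  have hswap : colAntisymm (fun x₁ x₂ x₃ x₄ => F x₃ x₄ x₁ x₂) x₁ x₂ x₃ x₄ =
      colAntisymm F x₃ x₄ x₁ x₂ := by
    simp only [colAntisymm_apply]; ring
  rw [hsplit, map_nsmul, map_add]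
  simp only [Pi.smul_apply, Pi.add_apply]
  rw [hswap, colAntisymm_rowPair_jet hE hB, colAntisymm_rowPair_jet hE hB, (hE u).2.1 x₃ x₄]
  ring

theorem colAntisymm_jet₂ {G : V → V → Curv V} (hG : ∀ a b, IsCurv (G a b))
    (hsymm : ∀ a b c d e f, G a b c d e f = G b a c d e f)
    (hB : ∀ a b c d e f, G a b c d e f + G c b d a e f + G d b a c e f = 0)
    (u w x₁ x₂ x₃ x₄ : V) :
    colAntisymm (fun x₁ x₂ x₃ x₄ => G x₁ x₃ u x₂ w x₄) x₁ x₂ x₃ x₄ = G u w x₁ x₂ x₃ x₄ := by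
  have key := fun b => sub_eq_of_bianchi₂ (E := fun a => G a b) (fun a => hG a b)
    (fun a b' c d e => hB a b b' c d e)
  simp only [colAntisymm_apply]
  linear_combination key x₃ x₁ x₂ u w x₄ - key x₄ x₁ x₂ u w x₃ + key u x₃ x₄ w x₁ x₂
    + hsymm u x₃ x₁ x₂ w x₄ + (hG x₃ u).2.1 x₁ x₂ w x₄
    - hsymm u x₄ x₁ x₂ w x₃ - (hG x₄ u).2.1 x₁ x₂ w x₃
    + hsymm w u x₃ x₄ x₁ x₂ + (hG u w).2.1 x₃ x₄ x₁ x₂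

theorem colAntisymm_twoSlotTerm {G : V → V → Curv V} (hG : ∀ a b, IsCurv (G a b))
    (hsymm : ∀ a b c d e f, G a b c d e f = G b a c d e f)
    (hB : ∀ a b c d e f, G a b c d e f + G c b d a e f + G d b a c e f = 0)
    (u w x₁ x₂ x₃ x₄ : V) :
    colAntisymm (twoSlotTerm G u w) x₁ x₂ x₃ x₄ = 2 * G u w x₁ x₂ x₃ x₄ := by
  have hsplit : twoSlotTerm G u w = (fun x₁ x₂ x₃ x₄ => G x₁ x₃ u x₂ w x₄) +
      fun x₁ x₂ x₃ x₄ => G x₁ x₃ w x₂ u x₄ := by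
    ext x₁ x₂ x₃ x₄
    rw [twoSlotTerm, rowPair, (hG x₁ x₃).2.1 u x₄]
    rfl
  rw [hsplit, map_add]
  simp only [Pi.add_apply]
  rw [colAntisymm_jet₂ hG hsymm hB, colAntisymm_jet₂ hG hsymm hB, hsymm w]
  ring

end Identities

def Bianchi₂ {k : ℕ} (D : (Fin k → V) → Curv V) : Prop :=
  ∀ (p : Fin k) (z : Fin k → V) (a b c d : V),
    D z a b c d + D (Function.update z p a) b (z p) c d
      + D (Function.update z p b) (z p) a c d = 0

section Jets

variable {k : ℕ} {D : (Fin k → V) → Curv V}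

theorem bianchi₂_of_last
    (hsym : ∀ (y : Fin k → V) (σ : Equiv.Perm (Fin k)) (x₁ x₂ x₃ x₄ : V),
      D (y ∘ σ) x₁ x₂ x₃ x₄ = D y x₁ x₂ x₃ x₄)
    (hB2 : ∀ (hk : 0 < k) (y : Fin k → V) (x₁ x₂ x₃ x₄ : V),
      D y x₁ x₂ x₃ x₄
        + D (Function.update y ⟨k - 1, Nat.sub_lt hk Nat.one_pos⟩ x₁) x₂
            (y ⟨k - 1, Nat.sub_lt hk Nat.one_pos⟩) x₃ x₄
        + D (Function.update y ⟨k - 1, Nat.sub_lt hk Nat.one_pos⟩ x₂)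
            (y ⟨k - 1, Nat.sub_lt hk Nat.one_pos⟩) x₁ x₃ x₄ = 0) :
    Bianchi₂ D := by
  intro p z a b c d
  set last : Fin k := ⟨k - 1, Nat.sub_lt p.pos Nat.one_pos⟩
  have hupdate : ∀ w : V, Function.update (z ∘ Equiv.swap p last) last w =
      Function.update z p w ∘ Equiv.swap p last := fun w => by
    rw [Function.update_comp_equiv, Equiv.symm_swap, Equiv.swap_apply_left]
  have h := hB2 p.pos (z ∘ Equiv.swap p last) a b c d
  rwa [hupdate, hupdate, Function.comp_apply, Equiv.swap_apply_right, hsym, hsym, hsym] at h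

theorem colAntisymm_oneSlotTerm_update (hcurv : ∀ y, IsCurv (D y)) (hB : Bianchi₂ D)
    (y : Fin k → V) (m : Fin k) (x₁ x₂ x₃ x₄ : V) :
    colAntisymm (oneSlotTerm (fun a => D (Function.update y m a)) (y m)) x₁ x₂ x₃ x₄ =
      12 * D y x₁ x₂ x₃ x₄ := by
  have h := colAntisymm_oneSlotTerm (fun a => hcurv _) (fun a b c d e => by
    simpa only [Function.update_idem, Function.update_self] using
      hB m (Function.update y m a) b c d e) (y m) x₁ x₂ x₃ x₄
  rwa [Function.update_eq_self] at h

theorem colAntisymm_twoSlotTerm_update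
    (hsym : ∀ (y : Fin k → V) (σ : Equiv.Perm (Fin k)) (x₁ x₂ x₃ x₄ : V),
      D (y ∘ σ) x₁ x₂ x₃ x₄ = D y x₁ x₂ x₃ x₄)
    (hcurv : ∀ y, IsCurv (D y)) (hB : Bianchi₂ D)
    (y : Fin k → V) {j m : Fin k} (hjm : j ≠ m) (x₁ x₂ x₃ x₄ : V) :
    colAntisymm (twoSlotTerm (fun a b => D (Function.update (Function.update y j a) m b))
      (y j) (y m)) x₁ x₂ x₃ x₄ = 2 * D y x₁ x₂ x₃ x₄ := by
  have hswap : ∀ a b, Function.update (Function.update y j a) m b ∘ Equiv.swap j m =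
      Function.update (Function.update y j b) m a := fun a b => by
    ext i
    simp only [Function.comp_apply, Function.update_apply, Equiv.swap_apply_def]
    grind
  have h := colAntisymm_twoSlotTerm
    (G := fun a b => D (Function.update (Function.update y j a) m b)) (fun a b => hcurv _)
    (fun a b c d e f => by rw [← hswap a b, hsym])
    (fun a b c d e f => by
      simpa only [Function.update_comm hjm, Function.update_idem,
        Function.update_of_ne hjm.symm, Function.update_self] using
        hB j (Function.update (Function.update y j a) m b) c d e f)
    (y j) (y m) x₁ x₂ x₃ x₄
  rwa [Function.update_eq_self, Function.update_eq_self] at h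

/-- The row symmetrizer, sorted by the two vectors that land in slots 1 and 3. -/
theorem rowK_eq
    (hsym : ∀ (y : Fin k → V) (σ : Equiv.Perm (Fin k)) (x₁ x₂ x₃ x₄ : V),
      D (y ∘ σ) x₁ x₂ x₃ x₄ = D y x₁ x₂ x₃ x₄) (y : Fin k → V) :
    rowK k (fun z a b c d => D z a b c d) y =
      (k.factorial : ℝ) • (rowSym22 (toFun4 (D y))
        + ∑ m, oneSlotTerm (fun a => D (Function.update y m a)) (y m)
        + ∑ j, ∑ m ∈ Finset.univ.erase j,
            twoSlotTerm (fun a b => D (Function.update (Function.update y j a) m b))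
              (y j) (y m)) := by
  ext x₁ x₂ x₃ x₄
  have hΦ : ∀ (z : Fin k → V) (τ : Equiv.Perm (Fin k)) a c,
      rowPair (D (z ∘ τ)) a x₂ c x₄ = rowPair (D z) a x₂ c x₄ := by
    intro z τ a c; simp only [rowPair, hsym]
  refine (sum_perm_eq_factorial_smul_sum_pairs (Φ := fun z a c => rowPair (D z) a x₂ c x₄) hΦ
    (Fin.cons x₁ (Fin.cons x₃ y))).trans ?_
  simp only [Fin.sum_univ_succ, Equiv.swap_self, Equiv.coe_refl, Function.comp_id,
    tail_comp_swap_zero_succ, Fin.tail_cons, Fin.cons_zero, Fin.cons_succ, Fin.update_cons_zero,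
    ← Fin.cons_update, nsmul_eq_mul, Pi.smul_apply, Pi.add_apply, Finset.sum_apply, smul_eq_mul]
  congr 1
  have hdiag : ∀ j : Fin k, ∑ m, rowPair (D (Function.update (Function.update y j x₁) m x₃))
        (y j) x₂ (Function.update y j x₁ m) x₄ =
      rowPair (D (Function.update y j x₃)) (y j) x₂ x₁ x₄ + ∑ m ∈ Finset.univ.erase j,
        rowPair (D (Function.update (Function.update y j x₁) m x₃)) (y j) x₂ (y m) x₄ := by
    intro j
    rw [← Finset.add_sum_erase _ _ (Finset.mem_univ j), Function.update_idem,
      Function.update_self]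
    congr 1
    refine Finset.sum_congr rfl fun m hm => ?_
    rw [Function.update_of_ne (Finset.ne_of_mem_erase hm)]
  simp only [hdiag, Finset.sum_add_distrib]
  simp only [oneSlotTerm, twoSlotTerm, rowSym22, toFun4, rowPair, Finset.sum_add_distrib]
  ring

end Jets

/-- The Young symmetrizer of the tableau with rows `{1,3,5,…,k+4}`, `{2,4}`
and columns `{1,2}`, `{3,4}` acts on elements of `C_k` as the scalar `2(k+3)(k+2)·k!`. -/
theorem youngK_eigenvalue
    {V : Type*} [NormedAddCommGroup V] [InnerProductSpace ℝ V]
    (k : ℕ) (D : MultilinearMap ℝ (fun _ : Fin k => V) (Curv V))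
    (hsym : ∀ (y : Fin k → V) (σ : Equiv.Perm (Fin k)) (x₁ x₂ x₃ x₄ : V),
      D (y ∘ σ) x₁ x₂ x₃ x₄ = D y x₁ x₂ x₃ x₄)
    (hcurv : ∀ y : Fin k → V, IsCurv (D y))
    (hB2 : ∀ (hk : 0 < k) (y : Fin k → V) (x₁ x₂ x₃ x₄ : V),
      D y x₁ x₂ x₃ x₄
        + D (Function.update y ⟨k - 1, Nat.sub_lt hk Nat.one_pos⟩ x₁) x₂
            (y ⟨k - 1, Nat.sub_lt hk Nat.one_pos⟩) x₃ x₄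
        + D (Function.update y ⟨k - 1, Nat.sub_lt hk Nat.one_pos⟩ x₂)
            (y ⟨k - 1, Nat.sub_lt hk Nat.one_pos⟩) x₁ x₃ x₄ = 0) :
    ∀ (y : Fin k → V) (x₁ x₂ x₃ x₄ : V),
      youngK k (fun y' z₁ z₂ z₃ z₄ => D y' z₁ z₂ z₃ z₄) y x₁ x₂ x₃ x₄ =
        (2 * ((k : ℝ) + 3) * ((k : ℝ) + 2) * (Nat.factorial k : ℝ)) * D y x₁ x₂ x₃ x₄ := by
  intro y x₁ x₂ x₃ x₄
  have hB := bianchi₂_of_last hsym hB2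
  calc youngK k (fun y' z₁ z₂ z₃ z₄ => D y' z₁ z₂ z₃ z₄) y x₁ x₂ x₃ x₄
      = colAntisymm (rowK k (fun y' z₁ z₂ z₃ z₄ => D y' z₁ z₂ z₃ z₄) y) x₁ x₂ x₃ x₄ := rfl
    _ = (k.factorial : ℝ) * (young22 (toFun4 (D y)) x₁ x₂ x₃ x₄
          + ∑ m, colAntisymm (oneSlotTerm (fun a => D (Function.update y m a)) (y m))
              x₁ x₂ x₃ x₄
          + ∑ j, ∑ m ∈ Finset.univ.erase j, colAntisymm (twoSlotTerm
              (fun a b => D (Function.update (Function.update y j a) m b)) (y j) (y m))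
              x₁ x₂ x₃ x₄) := by
      rw [rowK_eq hsym, map_smul, map_add, map_add, map_sum, map_sum]
      simp only [Pi.smul_apply, Pi.add_apply, Finset.sum_apply, map_sum, smul_eq_mul]
      rfl
    _ = (k.factorial : ℝ) * (12 * D y x₁ x₂ x₃ x₄ + ∑ _m : Fin k, 12 * D y x₁ x₂ x₃ x₄
          + ∑ j : Fin k, ∑ _m ∈ Finset.univ.erase j, 2 * D y x₁ x₂ x₃ x₄) := by
      rw [(hcurv y).young22_eq, Finset.sum_congr rfl fun m _ =>
          colAntisymm_oneSlotTerm_update hcurv hB y m x₁ x₂ x₃ x₄,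
        Finset.sum_congr rfl fun j _ => Finset.sum_congr rfl fun m hm =>
          colAntisymm_twoSlotTerm_update hsym hcurv hB y (Finset.ne_of_mem_erase hm).symm
            x₁ x₂ x₃ x₄]
    _ = _ := by
      simp only [Finset.sum_erase_eq_sub (Finset.mem_univ _), Finset.sum_const,
        Finset.card_univ, Fintype.card_fin, nsmul_eq_mul]
      ring

end CurvJet
end

section
/- Let R be an algebraic curvature tensor on V which is Einstein, i.e. ric_R = c⟪·,·⟫ for some c ∈ ℝ. Then for all x,y ∈ V: R*R(x,y,y,x) = −4Σᵢ (R_{x,eᵢ}·R)(eᵢ,y,y,x) = −4Σᵢ (R_{y,eᵢ}·R)(eᵢ,x,x,y), and the Ricci tensor of the algebraic curvature tensor R*R vanishes, i.e. Σᵢ R*R(x,eᵢ,y,eᵢ) = 0 for all x,y. -/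
/-!
The pair symmetries of `R` pass to every `B·R`, which turns `R*R(x,y,y,x)` into
`-2 (J(x,y) + J(y,x))` with `J(x,y) = ∑ⱼ (R_{x,eⱼ}·R)(eⱼ,y,y,x)`. Expanded in the basis, every
term of `J(x,y)` is symmetric in `x, y` except `R(∑ⱼ R_{x,eⱼ}eⱼ, y, y, x)`, and
`∑ⱼ R_{x,eⱼ}eⱼ = c x` for an Einstein tensor; hence `J(x,y) = J(y,x)`.

For the Ricci contraction of `R*R`, two of its four terms are traces `∑ᵢ (B·R)(a,eᵢ,b,eᵢ)` with
`B` skew-adjoint: the derivation commutes with the contraction up to a trace of `B` against a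
bilinear form, which vanishes, and what remains is `(B·ric)(a,b) = c (B·⟪·,·⟫)(a,b) = 0`. The
other two terms cancel because `R_{u,v} = -R_{v,u}`.
-/

open scoped RealInnerProductSpace

namespace CurvJet

variable {V : Type*} [NormedAddCommGroup V] [InnerProductSpace ℝ V] {n : ℕ}

namespace IsCurv

variable {R : Curv V}

lemma antisymm_left (hR : IsCurv R) (x y z w : V) : R x y z w = -R y x z w := hR.1 x y z w

lemma pair_symm (hR : IsCurv R) (x y z w : V) : R x y z w = R z w x y := hR.2.1 x y z w

lemma antisymm_right (hR : IsCurv R) (x y z w : V) : R x y z w = -R x y w z := by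
  rw [hR.pair_symm, hR.antisymm_left, hR.pair_symm w z]

end IsCurv

section PairSymmetric

variable {X : Type*} {A : X → X → X → X → ℝ}

lemma act4_antisymm_left (h₁ : ∀ x y z w, A x y z w = -A y x z w) (B : X → X) (x y z w : X) :
    act4 B A x y z w = -act4 B A y x z w := by
  simp only [act4]
  rw [h₁ (B x) y z w, h₁ x (B y) z w, h₁ x y (B z) w, h₁ x y z (B w)]
  ring

lemma act4_pair_symm (h₂ : ∀ x y z w, A x y z w = A z w x y) (B : X → X) (x y z w : X) :
    act4 B A x y z w = act4 B A z w x y := by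
  simp only [act4]
  rw [h₂ (B x) y z w, h₂ x (B y) z w, h₂ x y (B z) w, h₂ x y z (B w)]
  ring

lemma apply_mid_outer_comm (h₁ : ∀ x y z w, A x y z w = -A y x z w)
    (h₂ : ∀ x y z w, A x y z w = A z w x y) (x y z : X) : A x y y z = A z y y x := by
  rw [h₂ x y y z, h₁ y z x y, h₂ z y x y, h₂ z y y x, h₁ y x z y]

lemma apply_outer_eq_apply_mid (h₁ : ∀ x y z w, A x y z w = -A y x z w)
    (h₂ : ∀ x y z w, A x y z w = A z w x y) (x y z : X) : A x z y x = A z x x y := by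
  rw [h₂ x z y x, apply_mid_outer_comm h₁ h₂]

end PairSymmetric

variable {e : OrthonormalBasis (Fin n) ℝ V} {R : Curv V}

lemma RstarR_apply_diag (hR : IsCurv R) (x y : V) :
    RstarR e R x y y x
      = -2 * ((∑ j, act4 (curvEnd e R x (e j)) (toFun4 R) (e j) y y x)
        + (∑ j, act4 (curvEnd e R y (e j)) (toFun4 R) (e j) x x y)) := by
  have h₁ (B : V → V) := act4_antisymm_left (A := toFun4 R) hR.antisymm_left B
  have h₂ (B : V → V) := act4_pair_symm (A := toFun4 R) hR.pair_symm B
  have mid_outer (B : V → V) := apply_mid_outer_comm (h₁ B) (h₂ B)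
  have outer_mid (B : V → V) := apply_outer_eq_apply_mid (h₁ B) (h₂ B)
  change -((∑ j, act4 (curvEnd e R x (e j)) (toFun4 R) (e j) y y x)
    + (∑ j, act4 (curvEnd e R y (e j)) (toFun4 R) x (e j) y x)
    + (∑ j, act4 (curvEnd e R y (e j)) (toFun4 R) x y (e j) x)
    + (∑ j, act4 (curvEnd e R x (e j)) (toFun4 R) x y y (e j))) = _
  simp only [fun j => mid_outer (curvEnd e R x (e j)) x y (e j),
    fun j => outer_mid (curvEnd e R y (e j)) x y (e j),
    fun j => outer_mid (curvEnd e R y (e j)) x (e j) y,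
    fun j => mid_outer (curvEnd e R y (e j)) y x (e j)]
  ring

lemma sum_apply_basis_apply_basis {c : ℝ} (hE : ∀ x y, ric e R x y = c * ⟪x, y⟫) (a b : V) :
    ∑ i, R a (e i) b (e i) = -(c * ⟪a, b⟫) := by
  rw [← hE, ric, neg_neg]

lemma inner_curvEnd (u v z w : V) : ⟪curvEnd e R u v z, w⟫ = R u v z w := by
  conv_rhs => rw [← e.sum_repr' w]
  simp [curvEnd, sum_inner, real_inner_smul_left, map_sum, mul_comm]

lemma sum_curvEnd_basis_self (hR : IsCurv R) {c : ℝ} (hE : ∀ x y, ric e R x y = c * ⟪x, y⟫)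
    (x : V) : ∑ j, curvEnd e R x (e j) (e j) = c • x := by
  refine ext_inner_right ℝ fun w => ?_
  calc ⟪∑ j, curvEnd e R x (e j) (e j), w⟫ = -∑ j, R x (e j) w (e j) := by
        simp only [sum_inner, inner_curvEnd, ← Finset.sum_neg_distrib]
        exact Finset.sum_congr rfl fun j _ => hR.antisymm_right _ _ _ _
    _ = ⟪c • x, w⟫ := by rw [sum_apply_basis_apply_basis hE, neg_neg, real_inner_smul_left]

lemma sum_act4_curvEnd_basis (x y : V) :
    ∑ j, act4 (curvEnd e R x (e j)) (toFun4 R) (e j) y y x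
      = -(R (∑ j, curvEnd e R x (e j) (e j)) y y x
        + ∑ j, ∑ i, (R x (e j) y (e i) * (R (e j) (e i) y x + R (e j) y (e i) x)
          + R x (e j) x (e i) * R (e j) y y (e i))) := by
  simp only [act4, toFun4, curvEnd, map_sum, map_smul, LinearMap.coe_sum, LinearMap.coe_smul,
    Finset.sum_apply, Pi.smul_apply, smul_eq_mul, neg_add_rev, Finset.sum_add_distrib,
    Finset.sum_neg_distrib, mul_add]
  ring

lemma sum_act4_curvEnd_basis_comm (hR : IsCurv R) {c : ℝ}
    (hE : ∀ x y, ric e R x y = c * ⟪x, y⟫) (x y : V) :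
    ∑ j, act4 (curvEnd e R x (e j)) (toFun4 R) (e j) y y x
      = ∑ j, act4 (curvEnd e R y (e j)) (toFun4 R) (e j) x x y := by
  rw [sum_act4_curvEnd_basis, sum_act4_curvEnd_basis, sum_curvEnd_basis_self hR hE,
    sum_curvEnd_basis_self hR hE]
  simp only [map_smul, LinearMap.smul_apply, smul_eq_mul]
  rw [hR.pair_symm y x x y, Finset.sum_comm]
  congr 2
  refine Finset.sum_congr rfl fun i _ => Finset.sum_congr rfl fun j _ => ?_
  rw [hR.pair_symm y (e i) x (e j), hR.antisymm_left (e i) (e j) x y,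
    hR.antisymm_right (e j) (e i) x y, hR.pair_symm (e i) x (e j) y, hR.pair_symm y (e i) y (e j),
    hR.antisymm_left y (e j) y (e i), hR.antisymm_left (e i) x x (e j),
    hR.pair_symm x (e i) x (e j)]
  ring

lemma inner_curvEnd_skew (hR : IsCurv R) (u v z w : V) :
    ⟪curvEnd e R u v z, w⟫ = -⟪z, curvEnd e R u v w⟫ := by
  rw [inner_curvEnd, real_inner_comm, inner_curvEnd, hR.antisymm_right]

lemma curvEnd_swap (hR : IsCurv R) (u v : V) : curvEnd e R v u = -curvEnd e R u v := by
  funext z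
  simp [curvEnd, hR.antisymm_left v u]

lemma act4_neg (B : V → V) (a b c d : V) :
    act4 (-B) (toFun4 R) a b c d = -act4 B (toFun4 R) a b c d := by
  -- `map_neg` does not fire on the first slot of `Curv V` (the `Neg` instance of its codomain
  -- is not found), so negation goes through `(-1) • _`.
  simp only [act4, toFun4, Pi.neg_apply, ← neg_one_smul ℝ (B _), map_smul, LinearMap.smul_apply,
    smul_eq_mul]
  ring

lemma sum_bilin_skew_add_eq_zero (β : V →ₗ[ℝ] V →ₗ[ℝ] ℝ) {B : V → V}
    (hB : ∀ z w, ⟪B z, w⟫ = -⟪z, B w⟫) :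
    ∑ i, (β (B (e i)) (e i) + β (e i) (B (e i))) = 0 := by
  have expand_left (v w : V) : β v w = ∑ k, ⟪e k, v⟫ * β (e k) w := by
    conv_lhs => rw [← e.sum_repr' v]
    simp [map_sum]
  have expand_right (v w : V) : β w v = ∑ k, ⟪e k, v⟫ * β w (e k) := by
    conv_lhs => rw [← e.sum_repr' v]
    simp [map_sum]
  rw [Finset.sum_add_distrib, Finset.sum_congr rfl fun i _ => expand_left (B (e i)) (e i),
    Finset.sum_congr rfl fun i _ => expand_right (B (e i)) (e i), Finset.sum_comm,
    ← Finset.sum_add_distrib]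
  refine Finset.sum_eq_zero fun i _ => ?_
  rw [← Finset.sum_add_distrib]
  refine Finset.sum_eq_zero fun k _ => ?_
  rw [real_inner_comm, hB, real_inner_comm]
  ring

lemma sum_act4_basis_eq_zero {c : ℝ} (hE : ∀ x y, ric e R x y = c * ⟪x, y⟫)
    {B : V → V} (hB : ∀ z w, ⟪B z, w⟫ = -⟪z, B w⟫) (a b : V) :
    ∑ i, act4 B (toFun4 R) a (e i) b (e i) = 0 := by
  have hβ := sum_bilin_skew_add_eq_zero (e := e) ((R a).flip b) hB
  simp only [LinearMap.flip_apply] at hβ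
  simp only [act4, toFun4, Finset.sum_neg_distrib, Finset.sum_add_distrib,
    sum_apply_basis_apply_basis hE] at hβ ⊢
  rw [hB]
  linear_combination -hβ

lemma sum_RstarR_basis_eq_zero (hR : IsCurv R) {c : ℝ} (hE : ∀ x y, ric e R x y = c * ⟪x, y⟫)
    (x y : V) : ∑ i, RstarR e R x (e i) y (e i) = 0 := by
  have traceless (u v a b : V) : ∑ i, act4 (curvEnd e R u v) (toFun4 R) a (e i) b (e i) = 0 :=
    sum_act4_basis_eq_zero hE (inner_curvEnd_skew hR u v) a b
  have swapped : ∑ i, ∑ j, act4 (curvEnd e R (e i) (e j)) (toFun4 R) x (e i) y (e j)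
      = -∑ i, ∑ j, act4 (curvEnd e R (e i) (e j)) (toFun4 R) x (e j) y (e i) := by
    rw [Finset.sum_comm, ← Finset.sum_neg_distrib]
    refine Finset.sum_congr rfl fun j _ => ?_
    rw [← Finset.sum_neg_distrib]
    exact Finset.sum_congr rfl fun i _ => by rw [curvEnd_swap hR, act4_neg]
  change ∑ i, -((∑ j, act4 (curvEnd e R x (e j)) (toFun4 R) (e j) (e i) y (e i))
    + (∑ j, act4 (curvEnd e R (e i) (e j)) (toFun4 R) x (e j) y (e i))
    + (∑ j, act4 (curvEnd e R y (e j)) (toFun4 R) x (e i) (e j) (e i))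
    + (∑ j, act4 (curvEnd e R (e i) (e j)) (toFun4 R) x (e i) y (e j))) = 0
  simp only [Finset.sum_neg_distrib, Finset.sum_add_distrib, swapped]
  rw [Finset.sum_comm (f := fun i j => act4 (curvEnd e R x (e j)) (toFun4 R) (e j) (e i) y (e i)),
    Finset.sum_comm (f := fun i j => act4 (curvEnd e R y (e j)) (toFun4 R) x (e i) (e j) (e i))]
  simp only [traceless, Finset.sum_const_zero]
  ring

/-- For an Einstein algebraic curvature tensor, the Jacobi operator of
`R*R` has the two stated expressions and `R*R` is Ricci flat. -/
theorem star_einstein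
    {V : Type*} [NormedAddCommGroup V] [InnerProductSpace ℝ V] {n : ℕ}
    (e : OrthonormalBasis (Fin n) ℝ V)
    (R : Curv V) (hR : IsCurv R)
    (c : ℝ) (hE : ∀ x y, ric e R x y = c * ⟪x, y⟫) :
    (∀ x y, RstarR e R x y y x =
        -4 * ∑ i, act4 (curvEnd e R x (e i)) (toFun4 R) (e i) y y x) ∧
    (∀ x y, RstarR e R x y y x =
        -4 * ∑ i, act4 (curvEnd e R y (e i)) (toFun4 R) (e i) x x y) ∧
    (∀ x y, ∑ i, RstarR e R x (e i) y (e i) = 0) := by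
  refine ⟨fun x y => ?_, fun x y => ?_, sum_RstarR_basis_eq_zero hR hE⟩
  · rw [RstarR_apply_diag hR, ← sum_act4_curvEnd_basis_comm hR hE]
    ring
  · rw [RstarR_apply_diag hR, sum_act4_curvEnd_basis_comm hR hE]
    ring

end CurvJet
end

section
/- Let D ∈ C₂ and define the three traces ∇²_{x,y}ric(z,w) := −Σᵢ D(x,y;z,eᵢ,w,eᵢ), ∇ₓδ_yR(z,w) := −Σᵢ D(x,eᵢ;eᵢ,y,z,w), and ∇*∇R(x₁,x₂,x₃,x₄) := −Σᵢ D(eᵢ,eᵢ;x₁,x₂,x₃,x₄). Then for all x₁,x₂,x₃,x₄ ∈ V: (i) ∇_{x₁}δ_{x₂}R(x₃,x₄) = ∇²_{x₁,x₃}ric(x₂,x₄) − ∇²_{x₁,x₄}ric(x₂,x₃); (ii) ∇*∇R(x₁,x₂,x₃,x₄) = (1/4)·Young(2,2)[(z₁,z₂,z₃,z₄) ↦ ∇²_{z₁,z₃}ric(z₂,z₄)](x₁,x₂,x₃,x₄); (iii) ∇*∇R(x₁,x₂,x₃,x₄) = ∇_{x₁}δ_{x₂}R(x₃,x₄) − ∇_{x₂}δ_{x₁}R(x₃,x₄).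 In particular, ∇²ric = 0 implies ∇δR = 0, and ∇δR = 0 implies ∇*∇R = 0. -/
open scoped RealInnerProductSpace

namespace CurvJet

variable {V : Type*} [NormedAddCommGroup V] [InnerProductSpace ℝ V] {n : ℕ}

/-
For fixed `x`, the family `y ↦ D(x,y)` satisfies the axioms of a covariant derivative `∇R`
(`IsJet1`), so contracting its second Bianchi identity gives the contracted Bianchi identity
`δ(∇R)(y,z,w) = ∇_z ric(y,w) − ∇_w ric(y,z)`; applied to `D(x,·)` this is (i). Contracting the
second Bianchi identity of `D` itself at `x = y = eᵢ` and using the symmetry of `D` in `x, y`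
gives (iii). Finally `(z₁,z₂,z₃,z₄) ↦ ∇²_{z₁,z₃}ric(z₂,z₄)` is invariant under the row
permutations of the tableau, so `Young(2,2)` is four times its column antisymmetrization,
which by (i) is four times the right-hand side of (iii).
-/

theorem IsJet1.apply_self_eq {D1 : V →ₗ[ℝ] Curv V} (hD1 : IsJet1 D1) (u y z w : V) :
    D1 u u y z w = D1 z y u w u - D1 w y u z u := by
  obtain ⟨hcurv, hbianchi⟩ := hD1
  have hb := hbianchi u z w u y
  have h₁ : D1 u z w u y = D1 u u y z w := (hcurv u).2.1 z w u y
  have h₂ : D1 z w u u y = - D1 z y u w u := by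
    linarith [(hcurv z).2.1 w u u y, (hcurv z).1 u y w u]
  have h₃ : D1 w u z u y = D1 w y u z u := by
    linarith [(hcurv w).1 u z u y, (hcurv w).2.1 z u u y, (hcurv w).1 u y z u]
  linarith

theorem IsJet1.contracted_bianchi {D1 : V →ₗ[ℝ] Curv V} (hD1 : IsJet1 D1)
    (e : OrthonormalBasis (Fin n) ℝ V) (y z w : V) :
    - ∑ i, D1 (e i) (e i) y z w = nablaRic e D1 z y w - nablaRic e D1 w y z := by
  simp only [nablaRic, hD1.apply_self_eq, Finset.sum_sub_distrib]
  ring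

section C2

variable {D : V →ₗ[ℝ] V →ₗ[ℝ] Curv V}

theorem nablaDelta_eq_sub_nabla2Ric (hjet : ∀ x, IsJet1 (D x))
    (e : OrthonormalBasis (Fin n) ℝ V) (x y z w : V) :
    nablaDelta e D x y z w = nabla2Ric e D x z y w - nabla2Ric e D x w y z :=
  (hjet x).contracted_bianchi e y z w

theorem apply_self_eq_sub_of_symm
    (hsymm : ∀ x y z₁ z₂ z₃ z₄, D x y z₁ z₂ z₃ z₄ = D y x z₁ z₂ z₃ z₄)
    (hjet : ∀ x, IsJet1 (D x)) (u x₁ x₂ x₃ x₄ : V) :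
    D u u x₁ x₂ x₃ x₄ = D x₁ u u x₂ x₃ x₄ - D x₂ u u x₁ x₃ x₄ := by
  have hb := (hjet u).2 u x₁ x₂ x₃ x₄
  have h₁ : D u x₁ x₂ u x₃ x₄ = - D x₁ u u x₂ x₃ x₄ := by
    rw [hsymm, ((hjet x₁).1 u).1]
  have h₂ : D u x₂ u x₁ x₃ x₄ = D x₂ u u x₁ x₃ x₄ := hsymm u x₂ u x₁ x₃ x₄
  linarith

theorem roughLap_eq_sub_nablaDelta
    (hsymm : ∀ x y z₁ z₂ z₃ z₄, D x y z₁ z₂ z₃ z₄ = D y x z₁ z₂ z₃ z₄)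
    (hjet : ∀ x, IsJet1 (D x)) (e : OrthonormalBasis (Fin n) ℝ V) (x₁ x₂ x₃ x₄ : V) :
    roughLap e D x₁ x₂ x₃ x₄ = nablaDelta e D x₁ x₂ x₃ x₄ - nablaDelta e D x₂ x₁ x₃ x₄ := by
  simp only [roughLap, nablaDelta, apply_self_eq_sub_of_symm hsymm hjet,
    Finset.sum_sub_distrib]
  ring

theorem nabla2Ric_comm
    (hsymm : ∀ x y z₁ z₂ z₃ z₄, D x y z₁ z₂ z₃ z₄ = D y x z₁ z₂ z₃ z₄)
    (e : OrthonormalBasis (Fin n) ℝ V) (x y z w : V) :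
    nabla2Ric e D x y z w = nabla2Ric e D y x z w := by
  simp only [nabla2Ric, hsymm x y]

theorem nabla2Ric_symm (hjet : ∀ x, IsJet1 (D x)) (e : OrthonormalBasis (Fin n) ℝ V)
    (x y z w : V) : nabla2Ric e D x y z w = nabla2Ric e D x y w z := by
  simp only [nabla2Ric, ((hjet x).1 y).2.1 z _ w]

end C2

theorem rowSym22_eq_four_mul {W : Type*} {T : W → W → W → W → ℝ}
    (h₁₃ : ∀ a b c d, T a b c d = T c b a d)
    (h₂₄ : ∀ a b c d, T a b c d = T a d c b) (a b c d : W) :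
    rowSym22 T a b c d = 4 * T a b c d := by
  simp only [rowSym22]
  linarith [h₁₃ a b c d, h₂₄ a b c d, h₂₄ c b a d]

theorem young22_eq_four_mul {W : Type*} {T : W → W → W → W → ℝ}
    (h₁₃ : ∀ a b c d, T a b c d = T c b a d)
    (h₂₄ : ∀ a b c d, T a b c d = T a d c b) (x₁ x₂ x₃ x₄ : W) :
    young22 T x₁ x₂ x₃ x₄ =
      4 * (T x₁ x₂ x₃ x₄ - T x₂ x₁ x₃ x₄ - T x₁ x₂ x₄ x₃ + T x₂ x₁ x₄ x₃) := by
  simp only [young22, rowSym22_eq_four_mul h₁₃ h₂₄]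
  ring

/-- Relations between the three traces of an element of `C₂`. -/
theorem trace_hierarchy
    {V : Type*} [NormedAddCommGroup V] [InnerProductSpace ℝ V] {n : ℕ}
    (e : OrthonormalBasis (Fin n) ℝ V)
    (D : V →ₗ[ℝ] V →ₗ[ℝ] Curv V)
    (hsymm : ∀ x y z₁ z₂ z₃ z₄, D x y z₁ z₂ z₃ z₄ = D y x z₁ z₂ z₃ z₄)
    (hcurv : ∀ x y, IsCurv (D x y))
    (hB2 : ∀ x y z w u v, D x y z w u v + D x z w y u v + D x w y z u v = 0) :
    (∀ x₁ x₂ x₃ x₄, nablaDelta e D x₁ x₂ x₃ x₄ =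
        nabla2Ric e D x₁ x₃ x₂ x₄ - nabla2Ric e D x₁ x₄ x₂ x₃) ∧
    (∀ x₁ x₂ x₃ x₄, roughLap e D x₁ x₂ x₃ x₄ =
        (1 / 4) * young22 (fun z₁ z₂ z₃ z₄ => nabla2Ric e D z₁ z₃ z₂ z₄) x₁ x₂ x₃ x₄) ∧
    (∀ x₁ x₂ x₃ x₄, roughLap e D x₁ x₂ x₃ x₄ =
        nablaDelta e D x₁ x₂ x₃ x₄ - nablaDelta e D x₂ x₁ x₃ x₄) ∧
    ((∀ x y z w, nabla2Ric e D x y z w = 0) → (∀ x y z w, nablaDelta e D x y z w = 0)) ∧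
    ((∀ x y z w, nablaDelta e D x y z w = 0) → (∀ x₁ x₂ x₃ x₄, roughLap e D x₁ x₂ x₃ x₄ = 0)) := by
  have hjet : ∀ x, IsJet1 (D x) := fun x => ⟨hcurv x, hB2 x⟩
  have hi := nablaDelta_eq_sub_nabla2Ric hjet e
  have hiii := roughLap_eq_sub_nablaDelta hsymm hjet e
  have hii : ∀ x₁ x₂ x₃ x₄, roughLap e D x₁ x₂ x₃ x₄ =
      (1 / 4) * young22 (fun z₁ z₂ z₃ z₄ => nabla2Ric e D z₁ z₃ z₂ z₄) x₁ x₂ x₃ x₄ := by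
    intro x₁ x₂ x₃ x₄
    rw [young22_eq_four_mul (fun a b c d => nabla2Ric_comm hsymm e a c b d)
      (fun a b c d => nabla2Ric_symm hjet e a c b d), hiii, hi, hi]
    ring
  refine ⟨hi, hii, hiii, fun h x y z w => ?_, fun h x₁ x₂ x₃ x₄ => ?_⟩
  · rw [hi, h, h, sub_zero]
  · rw [hiii, h, h, sub_zero]

end CurvJet
end

section
/- Let R be an algebraic curvature tensor on V with Ricci tensor ric := ric_R, and fix x₂,x₄,x₅,x₆ ∈ V. Let T(z₁,z₂,z₃,z₄) := (R_{x₅,z₃}·R)(z₁,z₂,z₄,x₆) and T'(z₁,z₂,z₃,z₄) := (R_{x₅,z₁}·R)(z₃,z₂,z₄,x₆). Then Σᵢ Young(2,2)[T](eᵢ,x₂,eᵢ,x₄) = Σᵢ Young(2,2)[T'](eᵢ,x₂,eᵢ,x₄) = 3·( Σᵢ[(R_{x₅,eᵢ}·R)(eᵢ,x₂,x₄,x₆) + (R_{x₅,eᵢ}·R)(eᵢ,x₄,x₂,x₆)] + (R_{x₅,x₂}·ric)(x₄,x₆) + (R_{x₅,x₄}·ric)(x₂,x₆) ). -/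
/-! Each `R_{x₅,u}·R` is again a tensor with the symmetries of a curvature tensor, and these
symmetries alone reduce `Young(2,2)[T](u,x₂,u,x₄)` to three times the stated terms, except that
`R_{x₅,x₂}·R` and `R_{x₅,x₄}·R` appear traced over their second and fourth slots. Such a trace is
`-(R_{x₅,·}·ric)`: since `R_{x₅,·}` is skew-adjoint, its action on the two traced slots cancels. -/

open scoped RealInnerProductSpace

namespace CurvJet

variable {V : Type*} [NormedAddCommGroup V] [InnerProductSpace ℝ V] {n : ℕ}

section Symmetries

variable {X : Type*}

/-- The identities of `IsCurv` for a form that need not be multilinear, such as `act4 B A` with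
`B` an arbitrary map. -/
def IsCurvForm (A : X → X → X → X → ℝ) : Prop :=
  (∀ x y z w, A x y z w = - A y x z w) ∧
  (∀ x y z w, A x y z w = A z w x y) ∧
  (∀ x y z w, A x y z w + A y z x w + A z x y w = 0)

namespace IsCurvForm

variable {A : X → X → X → X → ℝ}

theorem antisymm_right (hA : IsCurvForm A) (x y z w : X) : A x y z w = - A x y w z := by
  linarith [hA.2.1 x y z w, hA.1 z w x y, hA.2.1 w z x y]

theorem act4 (hA : IsCurvForm A) (B : X → X) : IsCurvForm (act4 B A) := by
  obtain ⟨h₁, h₂, h₃⟩ := hA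
  refine ⟨fun a b c d => ?_, fun a b c d => ?_, fun a b c d => ?_⟩ <;> simp only [CurvJet.act4]
  · linarith [h₁ (B a) b c d, h₁ a (B b) c d, h₁ a b (B c) d, h₁ a b c (B d)]
  · linarith [h₂ (B a) b c d, h₂ a (B b) c d, h₂ a b (B c) d, h₂ a b c (B d)]
  · linarith [h₃ (B a) b c d, h₃ a (B b) c d, h₃ a b (B c) d, h₃ a b c (B d),
      h₃ b (B c) a d, h₃ b c (B a) d, h₃ (B b) c a d, h₃ b c a (B d),
      h₃ (B c) a b d, h₃ c (B a) b d, h₃ c a (B b) d, h₃ c a b (B d)]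

end IsCurvForm

theorem young22_swap13 (T : X → X → X → X → ℝ) :
    young22 (fun a b c d => T c b a d) = young22 T := by
  funext x₁ x₂ x₃ x₄
  simp only [young22, rowSym22]
  ring

theorem young22_diag_of_isCurvForm {T : X → X → X → X → X → ℝ} (hT : ∀ u, IsCurvForm (T u))
    (x₂ x₄ x₆ u : X) :
    young22 (fun z₁ z₂ z₃ z₄ => T z₃ z₁ z₂ z₄ x₆) u x₂ u x₄
      = 3 * (T u u x₂ x₄ x₆ + T u u x₄ x₂ x₆) - 3 * T x₂ x₄ u x₆ u - 3 * T x₄ x₂ u x₆ u := by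
  simp only [young22, rowSym22]
  linarith [(hT u).1 x₂ u x₄ x₆, (hT u).1 x₄ u x₂ x₆,
    (hT u).2.2 x₂ x₄ u x₆, (hT u).2.2 x₄ x₂ u x₆,
    (hT x₂).1 u u x₄ x₆, (hT x₄).1 u u x₂ x₆,
    (hT x₂).2.2 x₄ u u x₆, (hT x₄).2.2 x₂ u u x₆,
    (hT x₂).1 u x₄ u x₆, (hT x₄).1 u x₂ u x₆,
    (hT x₂).antisymm_right x₄ u u x₆, (hT x₄).antisymm_right x₂ u u x₆]

end Symmetries

theorem IsCurv.isCurvForm {R : Curv V} (hR : IsCurv R) : IsCurvForm (toFun4 R) := hR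

theorem _root_.OrthonormalBasis.sum_bilin_skew_add_eq_zero {ι : Type*} [Fintype ι]
    (e : OrthonormalBasis ι ℝ V) {B : V → V} (hB : ∀ u v, ⟪B u, v⟫ = -⟪u, B v⟫)
    (A : V →ₗ[ℝ] V →ₗ[ℝ] ℝ) :
    ∑ i, (A (B (e i)) (e i) + A (e i) (B (e i))) = 0 := by
  have expand : ∀ i, A (B (e i)) (e i) + A (e i) (B (e i))
      = ∑ j, ⟪e j, B (e i)⟫ * A (e j) (e i) + ∑ j, ⟪e j, B (e i)⟫ * A (e i) (e j) := by
    intro i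
    conv_lhs => rw [← e.sum_repr' (B (e i))]
    simp [map_sum, map_smul, LinearMap.sum_apply, smul_eq_mul]
  rw [Finset.sum_congr rfl fun i _ => expand i, Finset.sum_add_distrib,
    Finset.sum_comm (f := fun i j => ⟪e j, B (e i)⟫ * A (e i) (e j)),
    ← Finset.sum_add_distrib]
  refine Finset.sum_eq_zero fun i _ => ?_
  rw [← Finset.sum_add_distrib]
  refine Finset.sum_eq_zero fun j _ => ?_
  have hskew := hB (e i) (e j)
  rw [real_inner_comm] at hskew
  linear_combination A (e j) (e i) * hskew

theorem inner_curvEnd_s9 (e : OrthonormalBasis (Fin n) ℝ V) (R : Curv V) (x y z w : V) :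
    ⟪curvEnd e R x y z, w⟫ = R x y z w := by
  conv_rhs => rw [← e.sum_repr' w]
  simp [curvEnd, sum_inner, inner_smul_left, map_sum, map_smul, real_inner_comm, mul_comm]

theorem curvEnd_skew (e : OrthonormalBasis (Fin n) ℝ V) {R : Curv V} (hR : IsCurv R)
    (x y u v : V) : ⟪curvEnd e R x y u, v⟫ = -⟪u, curvEnd e R x y v⟫ := by
  rw [real_inner_comm _ u, inner_curvEnd_s9, inner_curvEnd_s9]
  exact hR.isCurvForm.antisymm_right x y u v

theorem sum_act4_trace_eq_neg_act2_ric (e : OrthonormalBasis (Fin n) ℝ V) (R : Curv V)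
    {B : V → V} (hB : ∀ u v, ⟪B u, v⟫ = -⟪u, B v⟫) (y w : V) :
    ∑ i, act4 B (toFun4 R) y (e i) w (e i) = - act2 B (ric e R) y w := by
  have hcancel := e.sum_bilin_skew_add_eq_zero hB ((R y).flip w)
  simp only [LinearMap.flip_apply, Finset.sum_add_distrib] at hcancel
  simp only [act4, act2, ric, toFun4, neg_add_rev, neg_neg, Finset.sum_neg_distrib,
    Finset.sum_add_distrib]
  linarith

/-- Lemma on traces of Young(2,2)-symmetrized tensors built from
`R_{x₅,·}·R`. -/
theorem young22_trace_curv_action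
    {V : Type*} [NormedAddCommGroup V] [InnerProductSpace ℝ V] {n : ℕ}
    (e : OrthonormalBasis (Fin n) ℝ V)
    (R : Curv V) (hR : IsCurv R) (x₂ x₄ x₅ x₆ : V) :
    (∑ i, young22 (fun z₁ z₂ z₃ z₄ => act4 (curvEnd e R x₅ z₃) (toFun4 R) z₁ z₂ z₄ x₆)
        (e i) x₂ (e i) x₄ =
      ∑ i, young22 (fun z₁ z₂ z₃ z₄ => act4 (curvEnd e R x₅ z₁) (toFun4 R) z₃ z₂ z₄ x₆)
        (e i) x₂ (e i) x₄) ∧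
    (∑ i, young22 (fun z₁ z₂ z₃ z₄ => act4 (curvEnd e R x₅ z₃) (toFun4 R) z₁ z₂ z₄ x₆)
        (e i) x₂ (e i) x₄ =
      3 * ((∑ i, (act4 (curvEnd e R x₅ (e i)) (toFun4 R) (e i) x₂ x₄ x₆
                  + act4 (curvEnd e R x₅ (e i)) (toFun4 R) (e i) x₄ x₂ x₆))
           + act2 (curvEnd e R x₅ x₂) (ric e R) x₄ x₆
           + act2 (curvEnd e R x₅ x₄) (ric e R) x₂ x₆)) := by
  have hT : ∀ u, IsCurvForm (act4 (curvEnd e R x₅ u) (toFun4 R)) :=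
    fun u => hR.isCurvForm.act4 _
  have htrace : ∀ u y w, ∑ i, act4 (curvEnd e R x₅ u) (toFun4 R) y (e i) w (e i)
      = - act2 (curvEnd e R x₅ u) (ric e R) y w :=
    fun u => sum_act4_trace_eq_neg_act2_ric e R (curvEnd_skew e hR x₅ u)
  refine ⟨by rw [← young22_swap13], ?_⟩
  simp only [young22_diag_of_isCurvForm hT, Finset.sum_sub_distrib, ← Finset.mul_sum, htrace]
  ring

end CurvJet
end

section
/- Let (R, ∇R, ∇²R) be an algebraic two-jet on V and fix x₂,x₄,x₅,x₆ ∈ V. Then −Σᵢ Young(2,2)[(z₁,z₂,z₃,z₄) ↦ ∇²_{z₁,z₃}R(x₅,z₂,x₆,z₄)](eᵢ,x₂,eᵢ,x₄) = Σ_{(σ,τ)} [ ∇*∇R(x_{τ(5)},x_{σ(2)},x_{τ(6)},x_{σ(4)}) + ∇²_{x_{σ(2)},x_{σ(4)}}ric(x_{τ(5)},x_{τ(6)}) − 2∇_{x_{σ(2)}}δ_{x_{τ(5)}}R(x_{σ(4)},x_{τ(6)}) − Σᵢ (R_{x_{σ(2)},eᵢ}·R)(eᵢ,x_{τ(5)},x_{σ(4)},x_{τ(6)})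 ], where the outer sum runs over the four pairs (σ,τ) with σ a permutation of the index set {2,4} and τ a permutation of the index set {5,6}. -/
/-!
Expanding the Young symmetrizer at `(eᵢ, x₂, eᵢ, x₄)` gives sixteen values of `∇²R`, sorted by
how often `eᵢ` occupies a derivative slot. Twice gives the rough Laplacian and never gives
`∇²ric`, each after pair symmetry. In the mixed terms the Ricci identity moves `eᵢ` to the
second derivative slot at the cost of a term `R_{x,eᵢ}·R`, and the symmetries of `∇²_{x,eᵢ}R`
and of `R_{x,eᵢ}·R` turn these into `∇δR` and the curvature action term. The identity already
holds summand by summand in `i`.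
-/

open scoped RealInnerProductSpace

namespace CurvJet

variable {V : Type*} [NormedAddCommGroup V] [InnerProductSpace ℝ V] {n : ℕ}

/-- One summand of the right-hand side in Statement 11, for
`p = x_{σ(2)}, q = x_{σ(4)}, u = x_{τ(5)}, v = x_{τ(6)}`. -/
noncomputable def stmt11Term {V : Type*} [NormedAddCommGroup V] [InnerProductSpace ℝ V]
    {n : ℕ} (e : OrthonormalBasis (Fin n) ℝ V) (R : Curv V)
    (D2 : V →ₗ[ℝ] V →ₗ[ℝ] Curv V) (p q u v : V) : ℝ :=
  roughLap e D2 u p v q + nabla2Ric e D2 p q u v - 2 * nablaDelta e D2 p u q v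
    - ∑ i, act4 (curvEnd e R p (e i)) (toFun4 R) (e i) u q v

end CurvJet

namespace CurvJet

section CurvSymm

variable {V : Type*}

structure HasCurvSymm (T : V → V → V → V → ℝ) : Prop where
  antisymm : ∀ a b c d, T a b c d = -T b a c d
  pair_symm : ∀ a b c d, T a b c d = T c d a b

variable {T : V → V → V → V → ℝ}

theorem HasCurvSymm.swap_swap (hT : HasCurvSymm T) (a b c d : V) :
    T a b c d = T b a d c := by
  linarith [hT.antisymm a b c d, hT.pair_symm b a c d, hT.antisymm c d b a,
    hT.pair_symm d c b a]

theorem HasCurvSymm.reverse (hT : HasCurvSymm T) (a b c d : V) :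
    T a b c d = T d c b a := by
  rw [hT.pair_symm, hT.swap_swap]

theorem HasCurvSymm.act4 (hT : HasCurvSymm T) (B : V → V) : HasCurvSymm (act4 B T) where
  antisymm a b c d := by
    simp only [CurvJet.act4]
    linarith [hT.antisymm (B a) b c d, hT.antisymm a (B b) c d, hT.antisymm a b (B c) d,
      hT.antisymm a b c (B d)]
  pair_symm a b c d := by
    simp only [CurvJet.act4]
    linarith [hT.pair_symm (B a) b c d, hT.pair_symm a (B b) c d, hT.pair_symm a b (B c) d,
      hT.pair_symm a b c (B d)]

end CurvSymm

variable {V : Type*} [NormedAddCommGroup V] [InnerProductSpace ℝ V] {n : ℕ}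

theorem IsCurv.hasCurvSymm {R : Curv V} (hR : IsCurv R) : HasCurvSymm (toFun4 R) :=
  ⟨hR.1, hR.2.1⟩

def stmt11Summand (R : Curv V) (B : V → V → V → V) (D2 : V →ₗ[ℝ] V →ₗ[ℝ] Curv V)
    (E p q u v : V) : ℝ :=
  -D2 E E u p v q - D2 p q u E v E + 2 * D2 p E E u q v - act4 (B p E) (toFun4 R) E u q v

theorem stmt11Term_eq_sum (e : OrthonormalBasis (Fin n) ℝ V) (R : Curv V)
    (D2 : V →ₗ[ℝ] V →ₗ[ℝ] Curv V) (p q u v : V) :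
    stmt11Term e R D2 p q u v = ∑ i, stmt11Summand R (curvEnd e R) D2 (e i) p q u v := by
  simp only [stmt11Term, stmt11Summand, roughLap, nabla2Ric, nablaDelta,
    Finset.sum_sub_distrib, Finset.sum_add_distrib, Finset.sum_neg_distrib, ← Finset.mul_sum]
  ring

section RicciIdentity

variable {R : Curv V} {B : V → V → V → V} {D2 : V →ₗ[ℝ] V →ₗ[ℝ] Curv V}
  (hR : HasCurvSymm (toFun4 R)) (hD2 : ∀ x y, HasCurvSymm (toFun4 (D2 x y)))
  (hricci : ∀ x y z₁ z₂ z₃ z₄, D2 x y z₁ z₂ z₃ z₄ - D2 y x z₁ z₂ z₃ z₄ =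
    act4 (B x y) (toFun4 R) z₁ z₂ z₃ z₄)
include hR hD2 hricci

/-- The Ricci identity moves `E` into the second derivative slot of the mixed terms. -/
theorem rowSym22_nabla2_mixed (E p q u v : V) :
    rowSym22 (fun z₁ z₂ z₃ z₄ => D2 z₁ z₃ u z₂ v z₄) p E E q =
      (2 * D2 p E E u q v - act4 (B p E) (toFun4 R) E u q v)
        + (2 * D2 p E E v q u - act4 (B p E) (toFun4 R) E v q u) := by
  have hact := hR.act4 (B p E)
  have hswap : D2 p E u E v q = D2 p E E u q v := (hD2 p E).swap_swap u E v q
  have hrev : D2 p E u q v E = D2 p E E v q u := (hD2 p E).reverse u q v E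
  simp only [rowSym22]
  linarith [hricci p E u E v q, hricci p E u q v E, hact.swap_swap u E v q, hact.reverse u q v E]

theorem neg_young22_nabla2_apply (E x₂ x₄ x₅ x₆ : V) :
    -young22 (fun z₁ z₂ z₃ z₄ => D2 z₁ z₃ x₅ z₂ x₆ z₄) E x₂ E x₄ =
      stmt11Summand R B D2 E x₂ x₄ x₅ x₆ + stmt11Summand R B D2 E x₄ x₂ x₅ x₆
        + stmt11Summand R B D2 E x₂ x₄ x₆ x₅ + stmt11Summand R B D2 E x₄ x₂ x₆ x₅ := by
  set T := fun z₁ z₂ z₃ z₄ => D2 z₁ z₃ x₅ z₂ x₆ z₄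
  have hreindex : rowSym22 T E x₂ x₄ E = rowSym22 T x₄ E E x₂ := by
    simp only [rowSym22]
    ring
  have hpure : rowSym22 T E x₂ E x₄ = 2 * D2 E E x₅ x₂ x₆ x₄ + 2 * D2 E E x₅ x₄ x₆ x₂ := by
    simp only [T, rowSym22]
    ring
  have hdiag : rowSym22 T x₂ E x₄ E = 2 * D2 x₂ x₄ x₅ E x₆ E + 2 * D2 x₄ x₂ x₅ E x₆ E := by
    simp only [T, rowSym22]
    ring
  have hmixed (p q : V) : rowSym22 T p E E q =
      (2 * D2 p E E x₅ q x₆ - act4 (B p E) (toFun4 R) E x₅ q x₆)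
        + (2 * D2 p E E x₆ q x₅ - act4 (B p E) (toFun4 R) E x₆ q x₅) :=
    rowSym22_nabla2_mixed hR hD2 hricci E p q x₅ x₆
  have hpair (x y a b c d : V) : D2 x y a b c d = D2 x y c d a b := (hD2 x y).pair_symm a b c d
  simp only [young22, hreindex, hpure, hdiag, hmixed, stmt11Summand]
  linarith [hpair E E x₆ x₂ x₅ x₄, hpair E E x₆ x₄ x₅ x₂, hpair x₂ x₄ x₆ E x₅ E,
    hpair x₄ x₂ x₆ E x₅ E]

end RicciIdentity

/-- Trace formula for the Young(2,2)-symmetrized second covariant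
derivative. -/
theorem young22_trace_nabla2
    {V : Type*} [NormedAddCommGroup V] [InnerProductSpace ℝ V] {n : ℕ}
    (e : OrthonormalBasis (Fin n) ℝ V)
    (R : Curv V) (D1 : V →ₗ[ℝ] Curv V) (D2 : V →ₗ[ℝ] V →ₗ[ℝ] Curv V)
    (hjet : IsTwoJet e R D1 D2) (x₂ x₄ x₅ x₆ : V) :
    -∑ i, young22 (fun z₁ z₂ z₃ z₄ => D2 z₁ z₃ x₅ z₂ x₆ z₄) (e i) x₂ (e i) x₄ =
      stmt11Term e R D2 x₂ x₄ x₅ x₆ + stmt11Term e R D2 x₄ x₂ x₅ x₆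
        + stmt11Term e R D2 x₂ x₄ x₆ x₅ + stmt11Term e R D2 x₄ x₂ x₆ x₅ := by
  obtain ⟨hR, -, hD2, -, hricci⟩ := hjet
  simp only [stmt11Term_eq_sum, ← Finset.sum_add_distrib, ← Finset.sum_neg_distrib]
  exact Finset.sum_congr rfl fun i _ =>
    neg_young22_nabla2_apply hR.hasCurvSymm (fun x y => (hD2 x y).hasCurvSymm) hricci
      (e i) x₂ x₄ x₅ x₆

end CurvJet
end
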